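/- With S_n and T_n(q) defined in the free ℝ-algebra F as in the context, for every n ≥ 0 and every real number q one has T_n(q) = Σ_I g_I(q) · Ψ^I, where the sum ranges over all compositions I = (i_1, …, i_r) of n and Ψ^I = Ψ_{i_1} Ψ_{i_2} ⋯ Ψ_{i_r}. That is, the coefficient of Ψ^I in the degree-n component S_n((1−q)A) of the (1−q)-transform is the composition polynomial g_I(q). -/

import Mathlib

/-!
Since `G 0 w` is homogeneous of degree `w.sum`, the outermost integration in `g_{J ++ [i]}(0)`
contributes the factor `1 / (J.sum + i)`, as in the recursion defining `S_n`; hence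
`S_n = Σ_{I ⊨ n} g_I(0) Ψ^I`. Chen's identity, splitting every integral from `0` to `1` at `q`,
gives `g_I(0) = Σ_{I = J ++ K} q^{|J|} g_J(0) g_K(q)`. Summed over compositions, this says that
`Σ_{I ⊨ m} g_I(q) Ψ^I` satisfies the recursion `S_n = Σ_k q^k S_k T_{n-k}(q)` that determines
`T_m(q)`.
-/

/-- `G q [i_k, …, i_1] t` is the iterated integral
`G_{(i_1,…,i_k)}(t) = ∫_q^t s^{i_k−1} G_{(i_1,…,i_{k−1})}(s) ds`
(the list argument is the composition read in reverse). -/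
noncomputable def G (q : ℝ) : List ℕ → ℝ → ℝ
  | [], _ => 1
  | i :: J, t => ∫ s in q..t, s ^ (i - 1) * G q J s

/-- The composition polynomial `g_I(q) = G_{(i_1,…,i_r)}(1)`. -/
noncomputable def g (q : ℝ) (I : List ℕ) : ℝ := G q I.reverse 1

/-- The noncommutative complete symmetric functions `S_n` in the free `ℝ`-algebra on the
noncommutative power sums `Ψ_1, Ψ_2, …` (the generator `k` of `FreeAlgebra ℝ ℕ`
standing for `Ψ_k`), defined by `S_0 = 1` and `S_n = (1/n) Σ_{k=1}^n S_{n−k} Ψ_k`. -/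
noncomputable def S : ℕ → FreeAlgebra ℝ ℕ
  | 0 => 1
  | n + 1 =>
      ((n + 1 : ℝ))⁻¹ • ∑ k ∈ Finset.range (n + 1), S (n - k) * FreeAlgebra.ι ℝ (k + 1)
  decreasing_by exact Nat.lt_succ_of_le (Nat.sub_le n k)

/-- `T_n(q)`, the degree-`n` component of `σ_q^{-1} σ_1`, i.e. of `S_n((1−q)A)`:
determined by `T_0(q) = 1` and the recursion `S_n = Σ_{k=0}^n q^k S_k T_{n−k}(q)`,
here solved for `T_n(q)`. -/
noncomputable def T (q : ℝ) : ℕ → FreeAlgebra ℝ ℕ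
  | 0 => 1
  | n + 1 =>
      S (n + 1) - ∑ k ∈ Finset.range (n + 1), q ^ (k + 1) • (S (k + 1) * T q (n - k))
  decreasing_by exact Nat.lt_succ_of_le (Nat.sub_le n k)

/-- `Ψ^I = Ψ_{i_1} Ψ_{i_2} ⋯ Ψ_{i_r}`. -/
noncomputable def psi (I : List ℕ) : FreeAlgebra ℝ ℕ :=
  (I.map (FreeAlgebra.ι ℝ)).prod

open Finset

@[fun_prop]
theorem continuous_G (q : ℝ) (w : List ℕ) : Continuous (G q w) := by
  induction w with
  | nil => exact continuous_const
  | cons i J ih =>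
    exact intervalIntegral.continuous_primitive
      (fun a b => (by fun_prop : Continuous fun s => s ^ (i - 1) * G q J s).intervalIntegrable a b)
      q

/-- Chen's identity. -/
theorem G_eq_sum_G_take_mul_G_drop (a b : ℝ) (w : List ℕ) (t : ℝ) :
    G a w t = ∑ j ∈ range (w.length + 1), G b (w.take j) t * G a (w.drop j) b := by
  induction w generalizing t with
  | nil => simp [G]
  | cons i w ih =>
    have hint : ∀ u v,
        IntervalIntegrable (fun s => s ^ (i - 1) * G a w s) MeasureTheory.volume u v :=
      fun u v => (by fun_prop : Continuous _).intervalIntegrable u v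
    have htail : ∑ j ∈ range (w.length + 1), G b (i :: w.take j) t * G a (w.drop j) b
        = ∫ s in b..t, s ^ (i - 1) * G a w s := by
      simp only [G, ← intervalIntegral.integral_mul_const]
      rw [← intervalIntegral.integral_finsetSum
        fun j _ => (by fun_prop : Continuous _).intervalIntegrable b t]
      refine intervalIntegral.integral_congr fun s _ => ?_
      simp only [ih s, mul_sum, mul_assoc]
    rw [List.length_cons, sum_range_succ']
    simp only [List.take_succ_cons, List.drop_succ_cons, List.take_zero, List.drop_zero, htail]
    rw [G, G, G, one_mul, add_comm,
      intervalIntegral.integral_add_adjacent_intervals (hint a b) (hint b t)]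

theorem G_reverse_eq_sum (a b : ℝ) (I : List ℕ) (t : ℝ) :
    G a I.reverse t
      = ∑ j ∈ range (I.length + 1), G a (I.take j).reverse b * G b (I.drop j).reverse t := by
  rw [G_eq_sum_G_take_mul_G_drop a b, List.length_reverse, ← sum_range_reflect]
  refine sum_congr rfl fun j hj => ?_
  have hj : j ≤ I.length := Nat.lt_succ_iff.mp (mem_range.mp hj)
  rw [List.take_reverse, List.drop_reverse, mul_comm]
  congr 4 <;> omega

theorem G_zero_cons_of_homogeneous {i : ℕ} (hi : 0 < i) {w : List ℕ}
    (hw : ∀ s, G 0 w s = s ^ w.sum * G 0 w 1) (t : ℝ) :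
    G 0 (i :: w) t = t ^ (i + w.sum) / (i + w.sum : ℕ) * G 0 w 1 := by
  have hpow : i - 1 + w.sum + 1 = i + w.sum := by omega
  rw [G, intervalIntegral.integral_congr fun s _ => by rw [hw s, ← mul_assoc, ← pow_add],
    intervalIntegral.integral_mul_const, integral_pow, ← Nat.cast_add_one, hpow,
    zero_pow (by omega), sub_zero, div_mul_eq_mul_div]

theorem G_zero_eq_pow_mul {w : List ℕ} (hw : ∀ i ∈ w, 0 < i) (t : ℝ) :
    G 0 w t = t ^ w.sum * G 0 w 1 := by
  induction w generalizing t with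
  | nil => simp [G]
  | cons i J ih =>
    have hi : 0 < i := hw i List.mem_cons_self
    have hJ := ih fun j hj => hw j (List.mem_cons_of_mem i hj)
    rw [G_zero_cons_of_homogeneous hi hJ, G_zero_cons_of_homogeneous hi hJ, List.sum_cons]
    ring

theorem g_zero_concat {i : ℕ} (hi : 0 < i) {J : List ℕ} (hJ : ∀ j ∈ J, 0 < j) :
    g 0 (J ++ [i]) = ((i + J.sum : ℕ) : ℝ)⁻¹ * g 0 J := by
  rw [g, g, List.reverse_append, List.reverse_singleton, List.singleton_append,
    G_zero_cons_of_homogeneous hi (G_zero_eq_pow_mul (by simpa using hJ)), List.sum_reverse,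
    one_pow, one_div]

theorem g_zero_eq_sum (q : ℝ) {I : List ℕ} (hI : ∀ i ∈ I, 0 < i) :
    g 0 I
      = ∑ j ∈ range (I.length + 1), q ^ (I.take j).sum * g 0 (I.take j) * g q (I.drop j) := by
  rw [g, G_reverse_eq_sum 0 q]
  refine sum_congr rfl fun j _ => ?_
  have hpos : ∀ i ∈ (I.take j).reverse, 0 < i := fun i hi =>
    hI i (List.take_subset j I (List.mem_reverse.mp hi))
  rw [G_zero_eq_pow_mul hpos, List.sum_reverse, g, g]

def comps : ℕ → Finset (List ℕ)
  | 0 => {[]}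
  | n + 1 => (range (n + 1)).biUnion fun k => (comps (n - k)).image (· ++ [k + 1])
  decreasing_by exact Nat.lt_succ_of_le (Nat.sub_le n k)

theorem mem_comps {n : ℕ} {I : List ℕ} :
    I ∈ comps n ↔ (∀ i ∈ I, 0 < i) ∧ I.sum = n := by
  induction n using Nat.strong_induction_on generalizing I with
  | _ n ih =>
    rcases I.eq_nil_or_concat with rfl | ⟨J, m, rfl⟩
    · cases n <;> simp [comps]
    · cases n with
      | zero => simpa [comps] using fun h _ => (h m (Or.inr rfl)).ne'
      | succ n =>
        simp only [comps, mem_biUnion, mem_range, mem_image, List.concat_eq_append,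
          List.append_singleton_inj, List.mem_append, List.mem_singleton, List.sum_append,
          List.sum_singleton]
        constructor
        · rintro ⟨k, hk, J, hJ, rfl, rfl⟩
          obtain ⟨hpos, hsum⟩ := (ih _ (by omega)).mp hJ
          exact ⟨fun i => by rintro (hi | rfl); exacts [hpos i hi, k.succ_pos], by omega⟩
        · rintro ⟨hpos, hsum⟩
          have hm := hpos m (Or.inr rfl)
          exact ⟨m - 1, by omega, J,
            (ih _ (by omega)).mpr ⟨fun i hi => hpos i (Or.inl hi), by omega⟩, rfl, by omega⟩

theorem sum_comps_succ {M : Type*} [AddCommMonoid M] (n : ℕ) (f : List ℕ → M) :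
    ∑ I ∈ comps (n + 1), f I
      = ∑ k ∈ range (n + 1), ∑ J ∈ comps (n - k), f (J ++ [k + 1]) := by
  rw [comps, sum_biUnion]
  · exact sum_congr rfl fun k _ => sum_image fun J _ J' _ h => List.append_left_injective _ h
  · intro k _ l _ hkl
    simp only [Function.onFun, disjoint_left, mem_image]
    rintro I ⟨J, -, rfl⟩ ⟨J', -, h⟩
    exact hkl (by simpa using congrArg List.getLast? h.symm)

theorem sum_comps_sum_take_drop {M : Type*} [AddCommMonoid M] (n : ℕ)
    (f : List ℕ → List ℕ → M) :
    ∑ I ∈ comps n, ∑ j ∈ range (I.length + 1), f (I.take j) (I.drop j)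
      = ∑ k ∈ range (n + 1), ∑ J ∈ comps k, ∑ K ∈ comps (n - k), f J K := by
  simp_rw [← sum_product', sum_sigma']
  refine sum_nbij' (fun p => ⟨(p.1.take p.2).sum, p.1.take p.2, p.1.drop p.2⟩)
    (fun p => ⟨p.2.1 ++ p.2.2, p.2.1.length⟩) ?_ ?_ ?_ ?_ fun _ _ => rfl
  · rintro ⟨I, j⟩ hI
    simp only [mem_sigma, mem_comps, mem_range, mem_product] at hI ⊢
    obtain ⟨⟨hpos, hsum⟩, -⟩ := hI
    have hsplit := List.sum_take_add_sum_drop I j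
    exact ⟨by omega, ⟨fun i hi => hpos i (List.take_subset j I hi), trivial⟩,
      fun i hi => hpos i (List.drop_subset j I hi), by omega⟩
  · rintro ⟨k, J, K⟩ h
    simp only [mem_sigma, mem_comps, mem_range, mem_product] at h ⊢
    obtain ⟨hk, ⟨hJ, rfl⟩, hK, hsum⟩ := h
    refine ⟨⟨fun i hi => (List.mem_append.mp hi).elim (hJ i) (hK i), ?_⟩, ?_⟩
    · rw [List.sum_append]; omega
    · rw [List.length_append]; omega
  · rintro ⟨I, j⟩ hI
    simp only [mem_sigma, mem_range] at hI
    simp only [List.take_append_drop, List.length_take, Sigma.mk.injEq, heq_eq_eq, true_and]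
    omega
  · rintro ⟨k, J, K⟩ h
    simp only [mem_sigma, mem_comps, mem_product] at h
    simp only [List.take_left, List.drop_left, h.2.1.2]

theorem psi_append (I J : List ℕ) : psi (I ++ J) = psi I * psi J := by
  simp [psi]

theorem S_eq_sum_comps (n : ℕ) : S n = ∑ I ∈ comps n, g 0 I • psi I := by
  induction n using Nat.strong_induction_on with
  | _ n ih =>
    cases n with
    | zero => simp [S, comps, g, G, psi]
    | succ n =>
      rw [S, sum_comps_succ, smul_sum]
      refine sum_congr rfl fun k hk => ?_
      rw [ih (n - k) (by omega), sum_mul, smul_sum]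
      refine sum_congr rfl fun J hJ => ?_
      obtain ⟨hpos, hsum⟩ := mem_comps.mp hJ
      have hk : k ≤ n := Nat.lt_succ_iff.mp (mem_range.mp hk)
      rw [g_zero_concat k.succ_pos hpos, hsum, show k + 1 + (n - k) = n + 1 by omega, psi_append,
        smul_mul_assoc, smul_smul]
      simp [psi]

theorem S_eq_sum_pow_smul_S_mul (q : ℝ) (n : ℕ) :
    S n = ∑ k ∈ range (n + 1), q ^ k • (S k * ∑ K ∈ comps (n - k), g q K • psi K) := by
  have hsplit : ∀ I ∈ comps n, g 0 I • psi I = ∑ j ∈ range (I.length + 1),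
        (q ^ (I.take j).sum * g 0 (I.take j) * g q (I.drop j))
          • (psi (I.take j) * psi (I.drop j)) := by
    intro I hI
    rw [g_zero_eq_sum q (mem_comps.mp hI).1, sum_smul]
    simp only [← psi_append, List.take_append_drop]
  rw [S_eq_sum_comps, sum_congr rfl hsplit, sum_comps_sum_take_drop n
    (fun J K => (q ^ J.sum * g 0 J * g q K) • (psi J * psi K))]
  refine sum_congr rfl fun k _ => ?_
  rw [S_eq_sum_comps, sum_mul_sum, smul_sum]
  refine sum_congr rfl fun J hJ => ?_
  rw [smul_sum, (mem_comps.mp hJ).2]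
  refine sum_congr rfl fun K _ => ?_
  rw [smul_mul_smul_comm, smul_smul, mul_assoc]

theorem T_eq_sum_comps (q : ℝ) (n : ℕ) : T q n = ∑ I ∈ comps n, g q I • psi I := by
  induction n using Nat.strong_induction_on with
  | _ n ih =>
    cases n with
    | zero => simp [T, comps, g, G, psi]
    | succ n =>
      have hT : ∀ k ∈ range (n + 1), q ^ (k + 1) • (S (k + 1) * T q (n - k))
          = q ^ (k + 1) • (S (k + 1) * ∑ K ∈ comps (n + 1 - (k + 1)), g q K • psi K) :=
        fun k hk => by rw [ih (n - k) (by have := mem_range.mp hk; omega), Nat.succ_sub_succ]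
      rw [T, sum_congr rfl hT, S_eq_sum_pow_smul_S_mul q (n + 1), sum_range_succ', pow_zero,
        one_smul, S, one_mul, Nat.sub_zero, add_sub_cancel_left]

/-- the coefficient of `Ψ^I` in `S_n((1−q)A)` is the composition
polynomial `g_I(q)`: `T_n(q) = Σ_{I ⊨ n} g_I(q) Ψ^I`. -/
theorem one_sub_q_transform_coefficients (n : ℕ) (q : ℝ) :
    T q n = ∑ᶠ I ∈ {I : List ℕ | (∀ i ∈ I, 0 < i) ∧ I.sum = n}, g q I • psi I := by
  have hcomps : {I : List ℕ | (∀ i ∈ I, 0 < i) ∧ I.sum = n} = ↑(comps n) := by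
    ext I
    simp [mem_comps]
  rw [hcomps, finsum_mem_coe_finset, T_eq_sum_comps]
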